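/- Every outerplanar graph admits a closed-neighborhood conflict-free coloring with two colors. -/

import Mathlib

open SimpleGraph

/-- The closed neighborhood `N[v]` of a vertex. -/
def closedNbhd {V : Type*} (G : SimpleGraph V) (v : V) : Set V := insert v (G.neighborSet v)

/-- A closed-neighborhood conflict-free `k`-coloring. -/
def IsCFColoring {V : Type*} (G : SimpleGraph V) (k : ℕ) (c : V → Option (Fin k)) : Prop :=
  ∀ v : V, ∃ w ∈ closedNbhd G v, ∃ col : Fin k, c w = some col ∧
    ∀ u ∈ closedNbhd G v, c u = some col → u = w

/-- `HasMinor G H` : `H` is a minor of `G`. -/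
def HasMinor {V W : Type*} (G : SimpleGraph V) (H : SimpleGraph W) : Prop :=
  ∃ f : W → Set V,
    (∀ w, (f w).Nonempty) ∧
    (∀ w, (G.induce (f w)).Connected) ∧
    (Pairwise fun w w' => Disjoint (f w) (f w')) ∧
    ∀ ⦃w w'⦄, H.Adj w w' → ∃ a ∈ f w, ∃ b ∈ f w', G.Adj a b

/-- Outerplanarity, via the excluded-minor characterization: a finite simple graph is
outerplanar iff it has neither a `K₄` minor nor a `K_{2,3}` minor. -/
def IsOuterplanar {V : Type*} (G : SimpleGraph V) : Prop :=
  ¬ HasMinor G (⊤ : SimpleGraph (Fin 4)) ∧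
  ¬ HasMinor G (completeBipartiteGraph (Fin 2) (Fin 3))

/-!
The colouring is grown outwards layer by layer. A root gets colour `a`, which witnesses its
closed neighbourhood. In general let `K` be the connected region handled so far, whose vertices
next to the rest are witnessed by colour `a`, and let `W` be the uncoloured vertices adjacent
to `K`. Contracting `K` to a point yields a vertex adjacent to all of `W`; as `G` has no `K₄` and
no `K_{2,3}` minor, `G[W]` has maximum degree two and its paths have no chords, so `G[W]` is a
disjoint union of induced paths. Every third vertex of each path gives a perfect code `T` of
`G[W]`. Colouring `T` with `b` and leaving the rest of `W` uncoloured witnesses every vertex of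
`W` without disturbing `K`, and the next layer repeats the step with the roles of `a` and `b`
exchanged. A layer with no vertex adjacent to `K` starts again from a new root.
-/

section

variable {V : Type*} {G : SimpleGraph V}

lemma mem_closedNbhd {u v : V} : u ∈ closedNbhd G v ↔ u = v ∨ G.Adj v u := Iff.rfl

lemma self_mem_closedNbhd (v : V) : v ∈ closedNbhd G v := Set.mem_insert v _

lemma mem_closedNbhd_comm {u v : V} : u ∈ closedNbhd G v ↔ v ∈ closedNbhd G u := by
  simp only [mem_closedNbhd, eq_comm, adj_comm]

lemma existsUnique_congr_of_eqOn {β : Type*} {s : Set V} {c c' : V → β} (h : Set.EqOn c c' s)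
    (y : β) : (∃! w, w ∈ s ∧ c w = y) ↔ ∃! w, w ∈ s ∧ c' w = y :=
  existsUnique_congr fun _ => and_congr_right fun hw => by rw [h hw]

lemma connected_induce_singleton (v : V) : (G.induce {v}).Connected := by
  rw [induce_singleton_eq_top]
  exact connected_top

lemma connected_induce_union_of_forall_exists_adj {K W : Set V} (hK : (G.induce K).Connected)
    (hW : ∀ w ∈ W, ∃ k ∈ K, G.Adj k w) : (G.induce (K ∪ W)).Connected := by
  obtain ⟨⟨u, hu⟩⟩ := hK.nonempty
  refine induce_connected_of_patches u (Or.inl hu) fun {v} hv => ?_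
  rcases hv with hv | hv
  · exact ⟨K, Set.subset_union_left, hu, hv, hK.preconnected _ _⟩
  · obtain ⟨k, hk, hkv⟩ := hW v hv
    have hKv : (G.induce (K ∪ {v})).Connected := connected_induce_union hK.preconnected
      (connected_induce_singleton v).preconnected hk rfl hkv
    exact ⟨K ∪ {v}, Set.union_subset_union_right _ (Set.singleton_subset_iff.2 hv), Or.inl hu,
      Or.inr rfl, hKv.preconnected _ _⟩

lemma connected_induce_closedNbhd (v : V) : (G.induce (closedNbhd G v)).Connected := by
  rw [closedNbhd, Set.insert_eq]
  exact connected_induce_union_of_forall_exists_adj (connected_induce_singleton v)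
    fun w hw => ⟨v, rfl, hw⟩

lemma connected_induce_getElem_of_le {l : List V} (hl : l.IsChain G.Adj) {i j : ℕ}
    (hij : i ≤ j) (hj : j < l.length) :
    (G.induce {v | ∃ k, ∃ hk : k < l.length, i ≤ k ∧ k ≤ j ∧ l[k] = v}).Connected := by
  rw [connected_iff_exists_forall_reachable]
  refine ⟨⟨l[i], i, by omega, le_rfl, hij, rfl⟩, ?_⟩
  rintro ⟨_, k, hk, hik, hkj, rfl⟩
  induction k, hik using Nat.le_induction with
  | base => rfl
  | succ k hik ih =>
    exact (ih (by omega) (by omega)).trans (Adj.reachable (hl.getElem k hk))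

lemma hasMinor_top_of_lt {ι : Type*} [LinearOrder ι] (f : ι → Set V)
    (hconn : ∀ n, (G.induce (f n)).Connected) (hdisj : ∀ n m, n < m → Disjoint (f n) (f m))
    (hadj : ∀ n m, n < m → ∃ a ∈ f n, ∃ b ∈ f m, G.Adj a b) : HasMinor G (⊤ : SimpleGraph ι) := by
  refine ⟨f, fun n => Set.nonempty_coe_sort.1 (hconn n).nonempty, hconn, ?_, fun n m hnm => ?_⟩
  · intro n m hnm
    rcases hnm.lt_or_gt with h | h
    exacts [hdisj n m h, (hdisj m n h).symm]
  · rcases (top_adj n m).1 hnm |>.lt_or_gt with h | h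
    · exact hadj n m h
    · obtain ⟨a, ha, b, hb, hab⟩ := hadj m n h
      exact ⟨b, hb, a, ha, hab.symm⟩

/-- `T` is a perfect code (efficient dominating set) of the induced subgraph `G[W]`. -/
def IsPerfectCode (G : SimpleGraph V) (W T : Set V) : Prop :=
  T ⊆ W ∧ ∀ w ∈ W, ∃! x, x ∈ T ∧ x ∈ closedNbhd G w

lemma IsPerfectCode.union {A B TA TB : Set V} (hA : IsPerfectCode G A TA)
    (hB : IsPerfectCode G B TB) (hAB : Disjoint A B) (hadj : ∀ a ∈ A, ∀ b ∈ B, ¬ G.Adj a b) :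
    IsPerfectCode G (A ∪ B) (TA ∪ TB) := by
  have hsep : ∀ a ∈ A, ∀ b ∈ B, b ∉ closedNbhd G a ∧ a ∉ closedNbhd G b := by
    intro a ha b hb
    refine ⟨?_, ?_⟩ <;> rintro (h | h)
    · exact Set.disjoint_left.1 hAB ha (h ▸ hb)
    · exact hadj a ha b hb h
    · exact Set.disjoint_left.1 hAB (h ▸ ha) hb
    · exact hadj a ha b hb h.symm
  refine ⟨Set.union_subset_union hA.1 hB.1, ?_⟩
  rintro w (hw | hw)
  · obtain ⟨x, ⟨hxT, hxw⟩, hx⟩ := hA.2 w hw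
    refine ⟨x, ⟨Or.inl hxT, hxw⟩, ?_⟩
    rintro y ⟨hyT | hyT, hyw⟩
    · exact hx y ⟨hyT, hyw⟩
    · exact absurd hyw (hsep w hw y (hB.1 hyT)).1
  · obtain ⟨x, ⟨hxT, hxw⟩, hx⟩ := hB.2 w hw
    refine ⟨x, ⟨Or.inr hxT, hxw⟩, ?_⟩
    rintro y ⟨hyT | hyT, hyw⟩
    · exact absurd hyw (hsep y (hA.1 hyT) w hw).2
    · exact hx y ⟨hyT, hyw⟩

/-- The phase `r` is chosen so that the windows at both ends, `{0, 1}` and `{n - 2, n - 1}`,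
contain an index `≡ r [MOD 3]`. -/
lemma exists_mod_three_existsUnique (n : ℕ) :
    ∃ r, ∀ i < n, ∃! j, j < n ∧ j % 3 = r ∧ (j = i ∨ j + 1 = i ∨ i + 1 = j) := by
  refine ⟨if n % 3 = 0 then 1 else 0, fun i hi => ?_⟩
  have : i % 3 = 0 ∨ i % 3 = 1 ∨ i % 3 = 2 := by omega
  split_ifs <;> rcases this with h | h | h
  all_goals first
    | exact ⟨i, by omega, fun j hj => by omega⟩
    | exact ⟨i + 1, by omega, fun j hj => by omega⟩
    | exact ⟨i - 1, by omega, fun j hj => by omega⟩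

lemma exists_isPerfectCode_of_adj_getElem_iff {l : List V} (hnd : l.Nodup)
    (hadj : ∀ i j (hi : i < l.length) (hj : j < l.length),
      G.Adj l[i] l[j] ↔ i + 1 = j ∨ j + 1 = i) :
    ∃ T, IsPerfectCode G {v | v ∈ l} T := by
  obtain ⟨r, hr⟩ := exists_mod_three_existsUnique l.length
  refine ⟨{v | ∃ j, ∃ hj : j < l.length, j % 3 = r ∧ l[j] = v}, ?_, ?_⟩
  · rintro _ ⟨j, hj, -, rfl⟩
    exact List.getElem_mem hj
  rintro _ hw
  obtain ⟨i, hi, rfl⟩ := List.mem_iff_getElem.1 hw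
  have hnear : ∀ j (hj : j < l.length),
      l[j] ∈ closedNbhd G l[i] ↔ j = i ∨ j + 1 = i ∨ i + 1 = j := by
    intro j hj
    rw [mem_closedNbhd, hnd.getElem_inj_iff, hadj i j hi hj]
    omega
  obtain ⟨j, ⟨hj, hjr, hji⟩, hjuniq⟩ := hr i hi
  refine ⟨l[j], ⟨⟨j, hj, hjr, rfl⟩, (hnear j hj).2 hji⟩, ?_⟩
  rintro _ ⟨⟨j', hj', hj'r, rfl⟩, hj'i⟩
  obtain rfl := hjuniq j' ⟨hj', hj'r, (hnear j' hj').1 hj'i⟩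
  rfl

structure IsPathIn (G : SimpleGraph V) (W : Set V) (l : List V) : Prop where
  isChain : l.IsChain G.Adj
  nodup : l.Nodup
  subset : ∀ v ∈ l, v ∈ W

namespace IsPathIn

variable {W : Set V} {l : List V}

lemma reverse (hl : IsPathIn G W l) : IsPathIn G W l.reverse :=
  ⟨List.isChain_reverse.2 (hl.isChain.imp fun _ _ h => h.symm), List.nodup_reverse.2 hl.nodup,
    fun v hv => hl.subset v (List.mem_reverse.1 hv)⟩

lemma exists_longest [Finite V] (hW : W.Nonempty) :
    ∃ l, IsPathIn G W l ∧ l ≠ [] ∧ ∀ l', IsPathIn G W l' → l'.length ≤ l.length := by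
  have := Fintype.ofFinite V
  obtain ⟨w, hw⟩ := hW
  have hfin : {l | IsPathIn G W l}.Finite :=
    (List.finite_length_le V (Fintype.card V)).subset fun l hl => hl.nodup.length_le_card
  have hw : IsPathIn G W [w] := ⟨List.isChain_singleton w, List.nodup_singleton w, by simpa⟩
  obtain ⟨l, hl, hmax⟩ := Set.exists_max_image _ List.length hfin ⟨[w], hw⟩
  exact ⟨l, hl, List.ne_nil_of_length_pos (hmax [w] hw), hmax⟩

lemma mem_of_adj_head (hl : IsPathIn G W l) (hmax : ∀ l', IsPathIn G W l' → l'.length ≤ l.length)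
    (h : l ≠ []) {x : V} (hx : x ∈ W) (hadj : G.Adj (l.head h) x) : x ∈ l := by
  by_contra hxl
  have hxl' : IsPathIn G W (x :: l) := by
    refine ⟨List.isChain_cons.2 ⟨?_, hl.isChain⟩, List.nodup_cons.2 ⟨hxl, hl.nodup⟩, ?_⟩
    · rw [List.head?_eq_some_head h]
      rintro _ ⟨⟩
      exact hadj.symm
    · rintro v (_ | ⟨_, hv⟩)
      exacts [hx, hl.subset v hv]
  simpa using hmax _ hxl'

end IsPathIn

structure IsAttached (G : SimpleGraph V) (K W : Set V) : Prop where
  connected : (G.induce K).Connected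
  disjoint : Disjoint K W
  exists_adj : ∀ w ∈ W, ∃ k ∈ K, G.Adj k w

namespace IsAttached

variable {K W : Set V} {l : List V}

lemma mono {W' : Set V} (hW : IsAttached G K W) (h : W' ⊆ W) : IsAttached G K W' :=
  ⟨hW.connected, hW.disjoint.mono_right h, fun w hw => hW.exists_adj w (h hw)⟩

lemma notMem_of_mem (hW : IsAttached G K W) {w : V} (hw : w ∈ W) : w ∉ K :=
  fun hk => Set.disjoint_left.1 hW.disjoint hk hw

lemma eq_or_eq_of_adj (hK23 : ¬ HasMinor G (completeBipartiteGraph (Fin 2) (Fin 3)))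
    (hW : IsAttached G K W) {w x y z : V} (hw : w ∈ W) (hx : x ∈ W) (hy : y ∈ W) (hz : z ∈ W)
    (hwx : G.Adj w x) (hwy : G.Adj w y) (hwz : G.Adj w z) (hxy : x ≠ y) : z = x ∨ z = y := by
  by_contra! hzxy
  apply hK23
  set f : Fin 2 ⊕ Fin 3 → Set V := Sum.elim ![{w}, K] ![{x}, {y}, {z}]
  have hconn : ∀ i, (G.induce (f i)).Connected := by
    rintro (i | i) <;> fin_cases i
    all_goals first | exact connected_induce_singleton _ | exact hW.connected
  have hout := And.intro (hW.notMem_of_mem hw) <| And.intro (hW.notMem_of_mem hx) <|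
    And.intro (hW.notMem_of_mem hy) (hW.notMem_of_mem hz)
  have hne := And.intro hwx.ne <| And.intro hwy.ne hwz.ne
  have hK := And.intro (hW.exists_adj x hx) <| And.intro (hW.exists_adj y hy) (hW.exists_adj z hz)
  refine ⟨f, fun i => Set.nonempty_coe_sort.1 (hconn i).nonempty, hconn, ?_, ?_⟩
  · rintro (i | i) (j | j) hij <;> fin_cases i <;> fin_cases j <;>
      simp_all [f, Set.disjoint_singleton_left, Set.disjoint_singleton_right, eq_comm]
  · rintro (i | i) (j | j) hij <;> fin_cases i <;> fin_cases j <;>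
      simp_all [f, adj_comm]

lemma not_adj_getElem (hK4 : ¬ HasMinor G (⊤ : SimpleGraph (Fin 4))) (hW : IsAttached G K W)
    (hl : IsPathIn G W l) {i j : ℕ} (hij : i + 2 ≤ j) (hj : j < l.length) :
    ¬ G.Adj l[i] l[j] := by
  intro hchord
  have hmem : ∀ k (hk : k < l.length), l[k] ∈ W := fun k hk => hl.subset _ (List.getElem_mem hk)
  set S := {v | ∃ k, ∃ hk : k < l.length, i + 2 ≤ k ∧ k ≤ j ∧ l[k] = v}
  have hSK : Disjoint S K :=
    Set.disjoint_left.2 fun _ ⟨k, hk, _, _, hkv⟩ => hkv ▸ hW.notMem_of_mem (hmem k hk)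
  obtain ⟨ki, hki, hkii⟩ := hW.exists_adj _ (hmem i (by omega))
  obtain ⟨ki', hki', hkii'⟩ := hW.exists_adj _ (hmem (i + 1) (by omega))
  obtain ⟨kj, hkj, hkjj⟩ := hW.exists_adj _ (hmem j hj)
  apply hK4
  refine hasMinor_top_of_lt ![{l[i]}, {l[i + 1]}, S, K] ?_ ?_ ?_
  · intro n
    fin_cases n
    exacts [connected_induce_singleton _, connected_induce_singleton _,
      connected_induce_getElem_of_le hl.isChain hij hj, hW.connected]
  · intro n m hnm
    fin_cases n <;> fin_cases m <;> simp at hnm ⊢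
    · exact fun h => absurd (hl.nodup.getElem_inj_iff.1 h) (by omega)
    · exact fun ⟨k, hk, hik, _, h⟩ => absurd (hl.nodup.getElem_inj_iff.1 h) (by omega)
    · exact hW.notMem_of_mem (hmem i (by omega))
    · exact fun ⟨k, hk, hik, _, h⟩ => absurd (hl.nodup.getElem_inj_iff.1 h) (by omega)
    · exact hW.notMem_of_mem (hmem (i + 1) (by omega))
    · exact hSK
  · intro n m hnm
    fin_cases n <;> fin_cases m <;> simp at hnm ⊢
    · exact hl.isChain.getElem i (by omega)
    · exact ⟨l[j], ⟨j, hj, hij, le_rfl, rfl⟩, hchord⟩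
    · exact ⟨ki, hki, hkii.symm⟩
    · exact ⟨l[i + 2], ⟨i + 2, by omega, le_rfl, hij, rfl⟩, hl.isChain.getElem (i + 1) (by omega)⟩
    · exact ⟨ki', hki', hkii'.symm⟩
    · exact ⟨l[j], ⟨j, hj, hij, le_rfl, rfl⟩, kj, hkj, hkjj.symm⟩

lemma mem_of_adj_of_forall_length_le
    (hK23 : ¬ HasMinor G (completeBipartiteGraph (Fin 2) (Fin 3))) (hW : IsAttached G K W)
    (hl : IsPathIn G W l) (hmax : ∀ l', IsPathIn G W l' → l'.length ≤ l.length)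
    {v x : V} (hv : v ∈ l) (hx : x ∈ W) (hvx : G.Adj v x) : x ∈ l := by
  have hne : l ≠ [] := List.ne_nil_of_mem hv
  obtain ⟨i, hi, rfl⟩ := List.mem_iff_getElem.1 hv
  by_cases hi0 : i = 0
  · subst hi0
    exact hl.mem_of_adj_head hmax hne hx (by rwa [List.head_eq_getElem])
  by_cases hilast : i + 1 = l.length
  · have hrev : l.reverse.head (by simpa) = l[i] := by
      simp only [List.head_reverse, List.getLast_eq_getElem]
      congr 1
      omega
    exact List.mem_reverse.1 <| hl.reverse.mem_of_adj_head (by simpa using hmax) _ hx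
      (hrev ▸ hvx)
  obtain ⟨k, rfl⟩ : ∃ k, i = k + 1 := ⟨i - 1, by omega⟩
  have hkk : l[k] ≠ l[k + 2] := fun h => absurd (hl.nodup.getElem_inj_iff.1 h) (by omega)
  have hmem : ∀ j (hj : j < l.length), l[j] ∈ W := fun j hj => hl.subset _ (List.getElem_mem hj)
  rcases hW.eq_or_eq_of_adj hK23 (hmem (k + 1) hi) (hmem k (by omega)) (hmem (k + 2) (by omega))
    hx (hl.isChain.getElem k (by omega)).symm (hl.isChain.getElem (k + 1) (by omega)) hvx hkk
    with rfl | rfl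
  all_goals exact List.getElem_mem _

lemma adj_getElem_iff (hK4 : ¬ HasMinor G (⊤ : SimpleGraph (Fin 4))) (hW : IsAttached G K W)
    (hl : IsPathIn G W l) (i j : ℕ) (hi : i < l.length) (hj : j < l.length) :
    G.Adj l[i] l[j] ↔ i + 1 = j ∨ j + 1 = i := by
  constructor
  · intro hadj
    by_contra! h
    rcases lt_trichotomy i j with hij | rfl | hij
    · exact hW.not_adj_getElem hK4 hl (by omega) hj hadj
    · exact hadj.ne rfl
    · exact hW.not_adj_getElem hK4 hl (by omega) hi hadj.symm
  · rintro (rfl | rfl)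
    exacts [hl.isChain.getElem i hj, (hl.isChain.getElem j hi).symm]

/-- A longest path in `G[W]` is induced and has no neighbours in `W` outside itself, so it splits
off `G[W]`. -/
theorem exists_isPerfectCode [Finite V] (hK4 : ¬ HasMinor G (⊤ : SimpleGraph (Fin 4)))
    (hK23 : ¬ HasMinor G (completeBipartiteGraph (Fin 2) (Fin 3))) (hW : IsAttached G K W) :
    ∃ T, IsPerfectCode G W T := by
  induction W using WellFoundedLT.induction with
  | _ W ih =>
  rcases W.eq_empty_or_nonempty with rfl | hne
  · exact ⟨∅, Set.empty_subset _, fun _ h => h.elim⟩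
  obtain ⟨l, hl, hl0, hmax⟩ := IsPathIn.exists_longest (G := G) hne
  set L := {v | v ∈ l}
  have hLW : L ⊆ W := hl.subset
  obtain ⟨TL, hTL⟩ := exists_isPerfectCode_of_adj_getElem_iff hl.nodup (hW.adj_getElem_iff hK4 hl)
  have hlt : W \ L < W := by
    obtain ⟨v, hv⟩ := List.exists_mem_of_ne_nil l hl0
    exact Set.sdiff_ssubset_left_iff.2 ⟨v, hLW hv, hv⟩
  obtain ⟨TR, hTR⟩ := ih _ hlt (hW.mono Set.sdiff_subset)
  refine ⟨TL ∪ TR, Set.union_sdiff_cancel hLW ▸ hTL.union hTR Set.disjoint_sdiff_right ?_⟩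
  exact fun v hv x hx hvx => hx.2 (hW.mem_of_adj_of_forall_length_le hK23 hl hmax hv hx.1 hvx)

end IsAttached

def boundary (G : SimpleGraph V) (R K : Set V) : Set V := {v ∈ R | ∃ k ∈ K, G.Adj k v}

variable {α : Type*}

/-- A colouring of `R` continuing that of an already coloured region `K`: the vertices of `K` next
to `R` are witnessed by colour `a`, so the vertices of `R` next to `K` must avoid `a`; they are
witnessed by colour `b` instead. -/
structure IsLayerColoring (G : SimpleGraph V) (R K : Set V) (a b : α) (c : V → Option α) :
    Prop where
  eq_none : ∀ v ∉ R, c v = none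
  existsUnique :
    ∀ v ∈ R, (∀ k ∈ K, ¬ G.Adj k v) → ∃ col, ∃! w, w ∈ closedNbhd G v ∧ c w = some col
  ne_of_adj : ∀ v ∈ R, ∀ k ∈ K, G.Adj k v → c v ≠ some a
  existsUnique_of_adj : ∀ v ∈ R, ∀ k ∈ K, G.Adj k v → ∃! w, w ∈ closedNbhd G v ∧ c w = some b

namespace IsLayerColoring

open scoped Classical

variable {R K : Set V} {a b : α} {c : V → Option α}

lemma mem_of_eq_some (hc : IsLayerColoring G R K a b c) {v : V} {x : α} (h : c v = some x) :
    v ∈ R := by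
  by_contra hv
  simp [hc.eq_none v hv] at h

lemma piecewise_singleton {r : V} (hr : r ∈ R) (hRK : ∀ v ∈ R, ∀ k ∈ K, ¬ G.Adj k v)
    (hc : IsLayerColoring G (R \ closedNbhd G r) (closedNbhd G r) a b c) :
    IsLayerColoring G R K a b (({r} : Set V).piecewise (fun _ => some a) c) where
  eq_none v hv := by
    rw [Set.piecewise_eq_of_notMem _ _ _ (by rintro rfl; exact hv hr)]
    exact hc.eq_none v fun h => hv h.1
  existsUnique v hv _ := by
    by_cases hvr : v ∈ closedNbhd G r
    · refine ⟨a, r, ⟨mem_closedNbhd_comm.1 hvr, by simp⟩, ?_⟩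
      rintro u ⟨hu, hcu⟩
      by_contra hur
      rw [Set.piecewise_eq_of_notMem _ _ _ (show u ∉ ({r} : Set V) from hur)] at hcu
      have huR := hc.mem_of_eq_some hcu
      have hvu : G.Adj v u := (mem_closedNbhd.1 hu).resolve_left fun h => huR.2 (h ▸ hvr)
      exact hc.ne_of_adj u huR v hvr hvu hcu
    · have hvR : v ∈ R \ closedNbhd G r := ⟨hv, hvr⟩
      have hvr' : closedNbhd G v ⊆ {r}ᶜ := fun u hu (hur : u = r) =>
        hvr (mem_closedNbhd_comm.1 (hur ▸ hu))
      have heq := (Set.piecewise_eqOn_compl {r} (fun _ => some a) c).mono hvr'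
      simp only [existsUnique_congr_of_eqOn heq]
      by_cases hK : ∃ k ∈ closedNbhd G r, G.Adj k v
      · obtain ⟨k, hk, hkv⟩ := hK
        exact ⟨b, hc.existsUnique_of_adj v hvR k hk hkv⟩
      · push Not at hK
        exact hc.existsUnique v hvR hK
  ne_of_adj v hv k hk hkv := absurd hkv (hRK v hv k hk)
  existsUnique_of_adj v hv k hk hkv := absurd hkv (hRK v hv k hk)

lemma piecewise_of_isPerfectCode {T : Set V} (hab : a ≠ b) (hT : IsPerfectCode G (boundary G R K) T)
    (hc : IsLayerColoring G (R \ boundary G R K) (K ∪ boundary G R K) b a c) :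
    IsLayerColoring G R K a b (T.piecewise (fun _ => some b) c) where
  eq_none v hv := by
    rw [Set.piecewise_eq_of_notMem _ _ _ fun h => hv (hT.1 h).1]
    exact hc.eq_none v fun h => hv h.1
  existsUnique v hv hvK := by
    have hvB : v ∉ boundary G R K := fun h => by
      obtain ⟨k, hk, hkv⟩ := h.2
      exact hvK k hk hkv
    have hvR : v ∈ R \ boundary G R K := ⟨hv, hvB⟩
    by_cases hadj : ∃ k ∈ K ∪ boundary G R K, G.Adj k v
    · obtain ⟨k, hk, hkv⟩ := hadj
      refine ⟨a, (existsUnique_congr fun w => and_congr_right fun _ => ?_).2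
        (hc.existsUnique_of_adj v hvR k hk hkv)⟩
      by_cases hwT : w ∈ T
      · rw [Set.piecewise_eq_of_mem _ _ _ hwT, hc.eq_none w fun h => h.2 (hT.1 hwT)]
        simp [hab.symm]
      · rw [Set.piecewise_eq_of_notMem _ _ _ hwT]
    · push Not at hadj
      have hvT : closedNbhd G v ⊆ Tᶜ := fun u hu huT => by
        rcases mem_closedNbhd.1 hu with rfl | hvu
        exacts [hvB (hT.1 huT), hadj u (Or.inr (hT.1 huT)) hvu.symm]
      have heq := (Set.piecewise_eqOn_compl T (fun _ => some b) c).mono hvT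
      simp only [existsUnique_congr_of_eqOn heq]
      exact hc.existsUnique v hvR hadj
  ne_of_adj v hv k hk hkv := by
    by_cases hvT : v ∈ T
    · simp [Set.piecewise_eq_of_mem _ _ _ hvT, hab.symm]
    · rw [Set.piecewise_eq_of_notMem _ _ _ hvT, hc.eq_none v fun h => h.2 ⟨hv, k, hk, hkv⟩]
      simp
  existsUnique_of_adj v hv k hk hkv := by
    have hvB : v ∈ boundary G R K := ⟨hv, k, hk, hkv⟩
    obtain ⟨x, ⟨hxT, hxv⟩, hx⟩ := hT.2 v hvB
    refine ⟨x, ⟨hxv, Set.piecewise_eq_of_mem _ _ _ hxT⟩, ?_⟩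
    rintro u ⟨hu, hcu⟩
    by_cases huT : u ∈ T
    · exact hx u ⟨huT, hu⟩
    rw [Set.piecewise_eq_of_notMem _ _ _ huT] at hcu
    have huR := hc.mem_of_eq_some hcu
    have hvu : G.Adj v u := (mem_closedNbhd.1 hu).resolve_left fun h => huR.2 (h ▸ hvB)
    exact absurd hcu (hc.ne_of_adj u huR v (Or.inr hvB) hvu)

end IsLayerColoring

theorem exists_isLayerColoring [Finite V] (hK4 : ¬ HasMinor G (⊤ : SimpleGraph (Fin 4)))
    (hK23 : ¬ HasMinor G (completeBipartiteGraph (Fin 2) (Fin 3))) {a b : α} (hab : a ≠ b)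
    (R K : Set V) (hRK : Disjoint R K) (hK : K.Nonempty → (G.induce K).Connected) :
    ∃ c, IsLayerColoring G R K a b c := by
  induction R using WellFoundedLT.induction generalizing K a b with
  | _ R ih =>
  rcases R.eq_empty_or_nonempty with rfl | ⟨r, hr⟩
  · exact ⟨fun _ => none, fun _ _ => rfl, fun _ h => h.elim, fun _ h => h.elim, fun _ h => h.elim⟩
  by_cases hW : (boundary G R K).Nonempty
  · obtain ⟨v, hv⟩ := hW
    obtain ⟨k, hk, -⟩ := hv.2
    have hatt : IsAttached G K (boundary G R K) :=
      ⟨hK ⟨k, hk⟩, hRK.symm.mono_right (Set.sep_subset _ _), fun _ hw => hw.2⟩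
    obtain ⟨T, hT⟩ := hatt.exists_isPerfectCode hK4 hK23
    obtain ⟨c, hc⟩ := ih (R \ boundary G R K) (Set.sdiff_ssubset_left_iff.2 ⟨v, hv.1, hv⟩)
      hab.symm (K ∪ boundary G R K)
      (Set.disjoint_union_right.2 ⟨hRK.mono_left Set.sdiff_subset, Set.disjoint_sdiff_left⟩)
      fun _ => connected_induce_union_of_forall_exists_adj hatt.connected hatt.exists_adj
    exact ⟨_, hc.piecewise_of_isPerfectCode hab hT⟩
  · obtain ⟨c, hc⟩ := ih (R \ closedNbhd G r)
      (Set.sdiff_ssubset_left_iff.2 ⟨r, hr, self_mem_closedNbhd r⟩) hab (closedNbhd G r)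
      Set.disjoint_sdiff_left fun _ => connected_induce_closedNbhd r
    exact ⟨_, hc.piecewise_singleton hr fun v hv k hk hkv => hW ⟨v, hv, k, hk, hkv⟩⟩

end

/-- every outerplanar graph admits a closed-neighborhood conflict-free
coloring with two colors. -/
theorem outerplanar_cf_two_colorable {V : Type*} [Fintype V] (G : SimpleGraph V)
    (hG : IsOuterplanar G) :
    ∃ c : V → Option (Fin 2), IsCFColoring G 2 c := by
  obtain ⟨c, hc⟩ := exists_isLayerColoring hG.1 hG.2 (zero_ne_one : (0 : Fin 2) ≠ 1) Set.univ ∅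
    (Set.disjoint_empty _) fun h => absurd h Set.not_nonempty_empty
  refine ⟨c, fun v => ?_⟩
  obtain ⟨col, w, ⟨hw, hcw⟩, huniq⟩ := hc.existsUnique v trivial fun _ h => h.elim
  exact ⟨w, hw, col, hcw, fun u hu hcu => huniq u ⟨hu, hcu⟩⟩
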